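/- Suppose the type distribution γ is absolutely continuous (with respect to Lebesgue measure on ℝ^{N+1}), the allocation space X has more than one element, the instrument space Y has more than one element, and there exists a coordinate i ∈ {1, …, N} such that θ^i is stochastically nonincreasing in θ^0 and the binarizations β(θ^i) and β(θ^0) are not independent. Then there exist admissible utility functions u^A, u^B, v^A, v^B such that some mechanism involving costly screening achieves a strictly higher principal payoff than every mechanism that screens only the productive component (i.e., every mechanism with y ≡ y₀ and (x, t) depending only on θ^A). -/

import Mathlib

/-!
Stochastic monotonicity of `θ^i` in `θ^0` gives, by Chebyshev's sum inequality along the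
conditional law of `θ^i` given `θ^0`, `P(θ^0 > m₀, θ^i ≥ mᵢ) ≤ 1/4`; dependence of the
binarizations makes it `1/4 - Δ` with `Δ > 0`. Let the productive value be `ψ(θ^0) ≈ 1` below
the median `m₀` and `≈ 2` above it, and let the costly instrument be a test that is free for the
agent exactly when `θ^i ≥ mᵢ` and costs the principal `Δ`. Screening `θ^0` alone, the principal
can at best sell to everybody at price `≈ 1` or to the upper half at price `≈ 2`: revenue `≈ 1`.
With the test, the half with `θ^i ≥ mᵢ` pays `1`, and the types above `m₀` that fail it, of mass
`≈ 1/2 - (1/4 - Δ)`, pay `2`: payoff `≈ 1 + 3Δ/2`.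
-/

open MeasureTheory Set ProbabilityTheory

noncomputable section

/-- `κ` is a regular conditional distribution of the second coordinate given the
first coordinate, under the joint law `γ`. -/
def IsRCD {A B : Type*} [MeasurableSpace A] [MeasurableSpace B]
    (γ : Measure (A × B)) (κ : Kernel A B) : Prop :=
  IsMarkovKernel κ ∧
    ∀ s : Set (A × B), MeasurableSet s →
      γ s = ∫⁻ a, κ a {b | (a, b) ∈ s} ∂γ.fst

/-- The topological support of a measure on `ℝ`. -/
def MSupport (μ : Measure ℝ) : Set ℝ :=
  {a | ∀ U : Set ℝ, IsOpen U → a ∈ U → 0 < μ U}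

variable {N : ℕ} {Y : Type} [MeasurableSpace Y]

/-- A measurable IC and IR mechanism in the two-component screening model (with
integrable transfer, so that the principal's payoff is well defined). -/
def Mechanism (ΘA : Set ℝ) (ΘB : Set (Fin N → ℝ)) (X : Set ℝ)
    (uA : ℝ → ℝ → ℝ) (uB : Y → (Fin N → ℝ) → ℝ)
    (γ : Measure (ℝ × (Fin N → ℝ)))
    (x : ℝ × (Fin N → ℝ) → ℝ) (y : ℝ × (Fin N → ℝ) → Y)
    (t : ℝ × (Fin N → ℝ) → ℝ) : Prop :=
  Measurable x ∧ Measurable y ∧ Measurable t ∧ Integrable t γ ∧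
    (∀ θ ∈ ΘA ×ˢ ΘB, x θ ∈ X) ∧
    (∀ θ ∈ ΘA ×ˢ ΘB, ∀ θ' ∈ ΘA ×ˢ ΘB,
      uA (x θ) θ.1 + uB (y θ) θ.2 - t θ ≥ uA (x θ') θ.1 + uB (y θ') θ.2 - t θ') ∧
    (∀ θ ∈ ΘA ×ˢ ΘB, uA (x θ) θ.1 + uB (y θ) θ.2 - t θ ≥ 0)

/-- The principal's expected payoff. -/
def Payoff (vA : ℝ → ℝ → ℝ) (vB : Y → (Fin N → ℝ) → ℝ)
    (γ : Measure (ℝ × (Fin N → ℝ)))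
    (x : ℝ × (Fin N → ℝ) → ℝ) (y : ℝ × (Fin N → ℝ) → Y)
    (t : ℝ × (Fin N → ℝ) → ℝ) : ℝ :=
  ∫ θ, (vA (x θ) θ.1 + vB (y θ) θ.2 + t θ) ∂γ

/-- A mechanism involves no costly screening: `y ≡ y₀` and `(x, t)` depend only on
the productive type `θ^A`. -/
def NoCostlyScreening (y₀ : Y)
    (x : ℝ × (Fin N → ℝ) → ℝ) (y : ℝ × (Fin N → ℝ) → Y)
    (t : ℝ × (Fin N → ℝ) → ℝ) : Prop :=
  (∀ θ, y θ = y₀) ∧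
    ∀ θ θ' : ℝ × (Fin N → ℝ), θ.1 = θ'.1 → x θ = x θ' ∧ t θ = t θ'

open scoped ENNReal Real

lemma measure_compl_mSupport (μ : Measure ℝ) : μ (MSupport μ)ᶜ = 0 := by
  obtain ⟨T, hTc, hTS, hT⟩ :=
    TopologicalSpace.isOpen_sUnion_countable {U : Set ℝ | IsOpen U ∧ μ U = 0} fun U hU => hU.1
  refine measure_mono_null (fun a ha => ?_) ((measure_sUnion_null_iff hTc).2 fun U hU => (hTS hU).2)
  simp only [MSupport, mem_compl_iff, mem_ofPred_eq, not_forall, not_lt, nonpos_iff_eq_zero] at ha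
  obtain ⟨U, hU, haU, hμU⟩ := ha
  exact hT ▸ ⟨U, ⟨hU, hμU⟩, haU⟩

lemma volume_setOf_fst_eq {β : Type*} [MeasureSpace β] [SFinite (volume : Measure β)] (c : ℝ) :
    (volume : Measure (ℝ × β)) {θ | θ.1 = c} = 0 :=
  Measure.quasiMeasurePreserving_fst.preimage_null (measure_singleton c)

lemma volume_setOf_snd_apply_eq {α ι : Type*} [MeasureSpace α] [SFinite (volume : Measure α)]
    [Fintype ι] (i : ι) (c : ℝ) :
    (volume : Measure (α × (ι → ℝ))) {θ | θ.2 i = c} = 0 :=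
  ((Measure.quasiMeasurePreserving_eval (fun _ : ι => (volume : Measure ℝ)) i).comp
    Measure.quasiMeasurePreserving_snd).preimage_null (measure_singleton c)

lemma measure_setOf_le_and_eq_lt_and {α : Type*} [MeasurableSpace α] {μ : Measure α}
    {f : α → ℝ} {c : ℝ} (h : μ {x | f x = c} = 0) (p : α → Prop) :
    μ {x | c ≤ f x ∧ p x} = μ {x | c < f x ∧ p x} := by
  refine measure_congr (Filter.eventuallyEq_set.2 ?_)
  filter_upwards [measure_eq_zero_iff_ae_notMem.1 h] with x hx
  rw [le_iff_lt_or_eq, or_iff_left (Ne.symm hx)]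

lemma measure_setOf_le_eq_lt {α : Type*} [MeasurableSpace α] {μ : Measure α} {f : α → ℝ}
    {c : ℝ} (h : μ {x | f x = c} = 0) : μ {x | c ≤ f x} = μ {x | c < f x} := by
  simpa only [and_true] using measure_setOf_le_and_eq_lt_and h fun _ => True

lemma exists_measureReal_Ioo_le {α : Type*} [MeasurableSpace α] (μ : Measure α) [IsFiniteMeasure μ]
    {f : α → ℝ} (hf : Measurable f) (m : ℝ) {ε : ℝ} (hε : 0 < ε) :
    ∃ δ > 0, μ.real {x | m < f x ∧ f x < m + δ} ≤ ε := by
  have hlim := tendsto_measure_biInter_gt (μ := μ) (a := m) (s := fun r => {x | m < f x ∧ f x < r})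
    (fun r _ => (measurableSet_lt measurable_const hf).inter (measurableSet_lt hf measurable_const)
      |>.nullMeasurableSet)
    (fun r r' _ hrr' x hx => ⟨hx.1, hx.2.trans_le hrr'⟩) ⟨m + 1, by linarith, measure_ne_top _ _⟩
  have hempty : ⋂ r > m, {x | m < f x ∧ f x < r} = ∅ :=
    eq_empty_of_forall_notMem fun x hx => by
      simp only [mem_iInter, mem_ofPred_eq] at hx
      exact (hx (f x) (hx (m + 1) (by linarith)).1).2.false
  rw [hempty, measure_empty] at hlim
  obtain ⟨r, hμr, hr⟩ := ((hlim.eventually (gt_mem_nhds (ENNReal.ofReal_pos.2 hε))).and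
    self_mem_nhdsWithin).exists
  refine ⟨r - m, sub_pos.2 hr, ?_⟩
  simpa [measureReal_def] using ENNReal.toReal_le_of_le_ofReal hε.le hμr.le

lemma IsRCD.measure_prod {A B : Type*} [MeasurableSpace A] [MeasurableSpace B]
    {ν : Measure (A × B)} {κ : Kernel A B} (hκ : IsRCD ν κ) {s : Set A} {t : Set B}
    (hs : MeasurableSet s) (ht : MeasurableSet t) :
    ν (s ×ˢ t) = ∫⁻ a in s, κ a t ∂ν.fst := by
  rw [hκ.2 _ (hs.prod ht), ← lintegral_indicator hs]
  congr 1 with a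
  by_cases ha : a ∈ s <;> simp [ha]

/-- Chebyshev's sum inequality for the two halves of a median split. -/
lemma setLIntegral_Ioi_le_setLIntegral_Iic {μ : Measure ℝ} [IsFiniteMeasure μ] {G : ℝ → ℝ≥0∞}
    (hG : Measurable G) {m : ℝ} (hμ : μ (Ioi m) = μ (Iic m))
    (hanti : ∀ a ∈ MSupport μ, ∀ a' ∈ MSupport μ, a < a' → G a' ≤ G a) :
    ∫⁻ a in Ioi m, G a ∂μ ≤ ∫⁻ a in Iic m, G a ∂μ := by
  have hsupp : ∀ᵐ a ∂μ, a ∈ MSupport μ :=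
    (measure_eq_zero_iff_ae_notMem.1 (measure_compl_mSupport μ)).mono fun _ => not_not.1
  have hbelow : ∀ a ∈ MSupport μ, a ≤ m → ∫⁻ a' in Ioi m, G a' ∂μ ≤ G a * μ (Iic m) := by
    intro a ha ham
    rw [← hμ, ← setLIntegral_const]
    refine setLIntegral_mono_ae measurable_const.aemeasurable ?_
    filter_upwards [hsupp] with a' ha' ham'
    exact hanti a ha a' ha' (ham.trans_lt ham')
  rcases eq_or_ne (μ (Iic m)) 0 with h0 | h0
  · rw [setLIntegral_measure_zero _ _ (hμ.trans h0)]
    exact zero_le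
  refine (ENNReal.mul_le_mul_iff_left h0 (measure_ne_top μ _)).1 ?_
  calc (∫⁻ a' in Ioi m, G a' ∂μ) * μ (Iic m) = ∫⁻ _ in Iic m, ∫⁻ a' in Ioi m, G a' ∂μ ∂μ := by
        rw [setLIntegral_const]
    _ ≤ ∫⁻ a in Iic m, G a * μ (Iic m) ∂μ := by
        refine setLIntegral_mono_ae (hG.mul_const _).aemeasurable ?_
        filter_upwards [hsupp] with a ha ham using hbelow a ha ham
    _ = (∫⁻ a in Iic m, G a ∂μ) * μ (Iic m) := lintegral_mul_const _ hG

lemma IsRCD.two_mul_measure_Ioi_prod_le {ν : Measure (ℝ × ℝ)} [IsFiniteMeasure ν]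
    {κ : Kernel ℝ ℝ} (hκ : IsRCD ν κ) {m b : ℝ} (hm : ν.fst (Ioi m) = ν.fst (Iic m))
    (hanti : ∀ a ∈ MSupport ν.fst, ∀ a' ∈ MSupport ν.fst, a < a' → κ a' (Ici b) ≤ κ a (Ici b)) :
    2 * ν (Ioi m ×ˢ Ici b) ≤ ν (univ ×ˢ Ici b) := by
  rw [hκ.measure_prod measurableSet_Ioi measurableSet_Ici,
    hκ.measure_prod MeasurableSet.univ measurableSet_Ici, Measure.restrict_univ,
    ← lintegral_add_compl (μ := ν.fst) _ measurableSet_Ioi, compl_Ioi, two_mul]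
  exact add_le_add_right
    (setLIntegral_Ioi_le_setLIntegral_Iic (κ.measurable_coe measurableSet_Ici) hm hanti) _

lemma measure_Ici_antitone_of_integral_antitone {μ : Measure ℝ} {κ : Kernel ℝ ℝ}
    [IsMarkovKernel κ] (hmono : ∀ a ∈ MSupport μ, ∀ a' ∈ MSupport μ, a < a' →
      ∀ f : ℝ → ℝ, Measurable f → Monotone f → (∃ M, ∀ b, |f b| ≤ M) →
        ∫ b, f b ∂(κ a') ≤ ∫ b, f b ∂(κ a)) (b : ℝ) :
    ∀ a ∈ MSupport μ, ∀ a' ∈ MSupport μ, a < a' → κ a' (Ici b) ≤ κ a (Ici b) := by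
  intro a ha a' ha' haa'
  have h := hmono a ha a' ha' haa' ((Ici b).indicator 1)
    (measurable_one.indicator measurableSet_Ici)
    (fun z z' hzz' => by
      simp only [indicator, mem_Ici, Pi.one_apply]
      split_ifs <;> linarith)
    ⟨1, fun z => by by_cases hz : z ∈ Ici b <;> simp [hz]⟩
  simp only [integral_indicator_one measurableSet_Ici] at h
  exact (ENNReal.toReal_le_toReal (measure_ne_top _ _) (measure_ne_top _ _)).1 h

lemma measureReal_upper_quadrant_lt_quarter {γ : Measure (ℝ × (Fin N → ℝ))}
    [IsProbabilityMeasure γ] (hac : γ ≪ volume) (i : Fin N) {κ : Kernel ℝ ℝ}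
    (hκ : IsRCD (γ.map fun θ => (θ.1, θ.2 i)) κ)
    (hmono : ∀ a ∈ MSupport γ.fst, ∀ a' ∈ MSupport γ.fst, a < a' →
      ∀ f : ℝ → ℝ, Measurable f → Monotone f → (∃ M, ∀ b, |f b| ≤ M) →
        ∫ b, f b ∂(κ a') ≤ ∫ b, f b ∂(κ a))
    {m0 mi : ℝ} (hm0 : γ {θ | m0 < θ.1} = 1 / 2 ∧ γ {θ | θ.1 ≤ m0} = 1 / 2)
    (hmi : γ {θ | mi ≤ θ.2 i} = 1 / 2)
    (hdep : γ {θ | m0 ≤ θ.1 ∧ mi ≤ θ.2 i} ≠ γ {θ | m0 ≤ θ.1} * γ {θ | mi ≤ θ.2 i}) :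
    γ.real {θ | m0 < θ.1 ∧ mi ≤ θ.2 i} < 1 / 4 := by
  have := hκ.1
  have hf : Measurable fun θ : ℝ × (Fin N → ℝ) => (θ.1, θ.2 i) := by fun_prop
  have hfst : (γ.map fun θ => (θ.1, θ.2 i)).fst = γ.fst := by
    rw [Measure.fst, Measure.map_map measurable_fst hf]; rfl
  have hhalf : 2 * γ {θ | m0 < θ.1 ∧ mi ≤ θ.2 i} ≤ 1 / 2 := by
    have h := hκ.two_mul_measure_Ioi_prod_le (m := m0) (b := mi)
      (by rw [hfst, Measure.fst_apply measurableSet_Ioi, Measure.fst_apply measurableSet_Iic]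
          exact hm0.1.trans hm0.2.symm)
      (hfst ▸ measure_Ici_antitone_of_integral_antitone hmono mi)
    rw [Measure.map_apply hf (measurableSet_Ioi.prod measurableSet_Ici),
      Measure.map_apply hf (MeasurableSet.univ.prod measurableSet_Ici)] at h
    refine h.trans_eq (hmi ▸ congrArg γ ?_)
    ext θ
    simp
  have hfst_le : γ {θ | m0 ≤ θ.1} = 1 / 2 :=
    (measure_setOf_le_eq_lt (hac (volume_setOf_fst_eq m0))).trans hm0.1
  have hne : γ {θ | m0 < θ.1 ∧ mi ≤ θ.2 i} ≠ 1 / 4 := by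
    have hquarter : (1 : ℝ≥0∞) / 2 * (1 / 2) = 1 / 4 := by
      simp only [one_div]
      rw [← ENNReal.mul_inv (by norm_num) (by norm_num)]
      norm_num
    rwa [measure_setOf_le_and_eq_lt_and (hac (volume_setOf_fst_eq m0)), hfst_le, hmi,
      hquarter] at hdep
  have hle : 2 * γ.real {θ | m0 < θ.1 ∧ mi ≤ θ.2 i} ≤ 1 / 2 := by
    simpa [measureReal_def, ENNReal.toReal_mul] using ENNReal.toReal_mono (by simp) hhalf
  refine lt_of_le_of_ne (by linarith) fun h => hne ?_
  rw [← ENNReal.ofReal_toReal (measure_ne_top γ _), ← measureReal_def, h,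
    ENNReal.ofReal_div_of_pos (by norm_num)]
  simp

lemma half_add_arctan_div_pi_mem_Ioo (a : ℝ) : 1 / 2 + Real.arctan a / π ∈ Ioo 0 1 := by
  have h1 := Real.neg_pi_div_two_lt_arctan a
  have h2 := Real.arctan_lt_pi_div_two a
  constructor
  · rw [← neg_lt_iff_pos_add', lt_div_iff₀ Real.pi_pos]; linarith
  · rw [← lt_sub_iff_add_lt', div_lt_iff₀ Real.pi_pos]; linarith

/-- The `arctan` term, of size less than `η`, only serves to make it strictly increasing. -/
def typeValue (m δ η a : ℝ) : ℝ :=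
  1 + projIcc (0 : ℝ) 1 zero_le_one ((a - m) / δ) + η * (1 / 2 + Real.arctan a / π)

section typeValue

variable {m δ η : ℝ}

lemma continuous_typeValue : Continuous (typeValue m δ η) := by
  unfold typeValue; fun_prop

lemma strictMono_typeValue (hδ : 0 < δ) (hη : 0 < η) : StrictMono (typeValue m δ η) := by
  intro a a' haa'
  have hclamp : (projIcc (0 : ℝ) 1 zero_le_one ((a - m) / δ) : ℝ) ≤
      projIcc (0 : ℝ) 1 zero_le_one ((a' - m) / δ) :=
    monotone_projIcc _ (div_le_div_of_nonneg_right (by linarith) hδ.le)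
  have htilt : Real.arctan a / π < Real.arctan a' / π :=
    div_lt_div_of_pos_right (Real.arctan_strictMono haa') Real.pi_pos
  unfold typeValue
  nlinarith

lemma one_le_typeValue (hη : 0 ≤ η) (a : ℝ) : 1 ≤ typeValue m δ η a := by
  have := (half_add_arctan_div_pi_mem_Ioo a).1
  have := (projIcc (0 : ℝ) 1 zero_le_one ((a - m) / δ)).2.1
  unfold typeValue
  nlinarith

lemma typeValue_le (hη : 0 ≤ η) (a : ℝ) : typeValue m δ η a ≤ 2 + η := by
  have := (half_add_arctan_div_pi_mem_Ioo a).2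
  have := (projIcc (0 : ℝ) 1 zero_le_one ((a - m) / δ)).2.2
  unfold typeValue
  nlinarith

lemma typeValue_le_of_le (hδ : 0 < δ) (hη : 0 ≤ η) {a : ℝ} (ha : a ≤ m) :
    typeValue m δ η a ≤ 1 + η := by
  have := (half_add_arctan_div_pi_mem_Ioo a).2
  have hclamp : (projIcc (0 : ℝ) 1 zero_le_one ((a - m) / δ) : ℝ) = 0 := by
    rw [projIcc_of_le_left _ (div_nonpos_of_nonpos_of_nonneg (by linarith) hδ.le)]
  unfold typeValue
  rw [hclamp]
  nlinarith

lemma two_le_typeValue (hδ : 0 < δ) (hη : 0 ≤ η) {a : ℝ} (ha : m + δ ≤ a) :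
    2 ≤ typeValue m δ η a := by
  have := (half_add_arctan_div_pi_mem_Ioo a).1
  have hclamp : (projIcc (0 : ℝ) 1 zero_le_one ((a - m) / δ) : ℝ) = 1 := by
    rw [projIcc_of_right_le _ ((le_div_iff₀ hδ).2 (by linarith))]
  unfold typeValue
  rw [hclamp]
  nlinarith

end typeValue

def qualityIndex (X : Set ℝ) (x : ℝ) : ℝ := (x - sInf X) / (sSup X - sInf X)

section qualityIndex

variable {X : Set ℝ}

lemma IsCompact.sInf_lt_sSup (hX : IsCompact X) (hXnt : X.Nontrivial) : sInf X < sSup X := by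
  obtain ⟨x, hx, x', hx', hxx'⟩ := hXnt
  rcases hxx'.lt_or_gt with h | h
  · exact (csInf_le hX.bddBelow hx).trans_lt (h.trans_le (le_csSup hX.bddAbove hx'))
  · exact (csInf_le hX.bddBelow hx').trans_lt (h.trans_le (le_csSup hX.bddAbove hx))

lemma continuous_qualityIndex : Continuous (qualityIndex X) := by
  unfold qualityIndex; fun_prop

lemma qualityIndex_sInf : qualityIndex X (sInf X) = 0 := by
  simp [qualityIndex]

lemma qualityIndex_sSup (h : sInf X < sSup X) : qualityIndex X (sSup X) = 1 :=
  div_self (sub_pos.2 h).ne'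

lemma qualityIndex_mem_Icc (hX : IsCompact X) {x : ℝ} (hx : x ∈ X) :
    qualityIndex X x ∈ Icc 0 1 := by
  have h₀ := csInf_le hX.bddBelow hx
  have h₁ := le_csSup hX.bddAbove hx
  exact ⟨div_nonneg (by linarith) (by linarith), div_le_one_of_le₀ (by linarith) (by linarith)⟩

lemma strictMono_qualityIndex (h : sInf X < sSup X) : StrictMono (qualityIndex X) :=
  fun _ _ hxx' => div_lt_div_of_pos_right (by linarith) (sub_pos.2 h)

end qualityIndex

def productiveUtility (X : Set ℝ) (ψ : ℝ → ℝ) (x a : ℝ) : ℝ := qualityIndex X x * ψ a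

section productiveUtility

variable {X : Set ℝ} {ψ : ℝ → ℝ}

lemma continuous_productiveUtility (hψ : Continuous ψ) :
    Continuous fun p : ℝ × ℝ => productiveUtility X ψ p.1 p.2 :=
  (continuous_qualityIndex.comp continuous_fst).mul (hψ.comp continuous_snd)

lemma productiveUtility_le_productiveUtility (hX : IsCompact X) (hψ : Monotone ψ) {x : ℝ}
    (hx : x ∈ X) {a a' : ℝ} (haa' : a ≤ a') :
    productiveUtility X ψ x a ≤ productiveUtility X ψ x a' :=
  mul_le_mul_of_nonneg_left (hψ haa') (qualityIndex_mem_Icc hX hx).1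

lemma productiveUtility_lt_productiveUtility (h : sInf X < sSup X) {x x' a : ℝ} (hxx' : x < x')
    (ha : 0 < ψ a) : productiveUtility X ψ x a < productiveUtility X ψ x' a :=
  mul_lt_mul_of_pos_right (strictMono_qualityIndex h hxx') ha

lemma productiveUtility_sub_lt_sub (h : sInf X < sSup X) (hψ : StrictMono ψ) {x x' a a' : ℝ}
    (hxx' : x < x') (haa' : a < a') :
    productiveUtility X ψ x' a - productiveUtility X ψ x a <
      productiveUtility X ψ x' a' - productiveUtility X ψ x a' := by
  have := mul_lt_mul_of_pos_left (sub_pos.2 (hψ haa')) (sub_pos.2 (strictMono_qualityIndex h hxx'))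
  unfold productiveUtility
  linarith

end productiveUtility

section instrument

variable {I : Type}

open scoped Classical in
def instrumentUtility (y₀ : I) (i : Fin N) (mi : ℝ) (y : I) (b : Fin N → ℝ) : ℝ :=
  if y = y₀ ∨ mi ≤ b i then 0 else -1

open scoped Classical in
def instrumentValue (y₀ : I) (ε : ℝ) (y : I) (_b : Fin N → ℝ) : ℝ :=
  if y = y₀ then 0 else -ε

variable {y₀ : I} {i : Fin N} {mi ε : ℝ}

lemma instrumentUtility_self (y₀ : I) (i : Fin N) (mi : ℝ) (b : Fin N → ℝ) :
    instrumentUtility y₀ i mi y₀ b = 0 :=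
  if_pos (Or.inl rfl)

lemma instrumentValue_self (y₀ : I) (ε : ℝ) (b : Fin N → ℝ) : instrumentValue y₀ ε y₀ b = 0 :=
  if_pos rfl

lemma measurable_instrumentUtility [MeasurableSpace I] (hy₀ : MeasurableSet {y₀}) (i : Fin N)
    (mi : ℝ) : Measurable fun p : I × (Fin N → ℝ) => instrumentUtility y₀ i mi p.1 p.2 :=
  Measurable.ite ((measurable_fst hy₀).union
      (measurableSet_le measurable_const ((measurable_pi_apply i).comp measurable_snd)))
    measurable_const measurable_const

lemma measurable_instrumentValue [MeasurableSpace I] (hy₀ : MeasurableSet {y₀}) (ε : ℝ) :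
    Measurable fun p : I × (Fin N → ℝ) => instrumentValue y₀ ε p.1 p.2 :=
  Measurable.ite (measurable_fst hy₀) measurable_const measurable_const

lemma abs_instrumentUtility_le (y : I) (b : Fin N → ℝ) : |instrumentUtility y₀ i mi y b| ≤ 1 := by
  unfold instrumentUtility; split_ifs <;> norm_num

lemma abs_instrumentValue_le (hε : 0 ≤ ε) (y : I) (b : Fin N → ℝ) :
    |instrumentValue y₀ ε y b| ≤ ε := by
  unfold instrumentValue; split_ifs <;> simp [abs_of_nonneg hε, hε]

lemma instrumentUtility_add_instrumentValue_neg (hε : 0 < ε) {y : I} (hy : y ≠ y₀)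
    (b : Fin N → ℝ) : instrumentUtility y₀ i mi y b + instrumentValue y₀ ε y b < 0 := by
  unfold instrumentUtility instrumentValue; split_ifs <;> linarith

lemma instrumentUtility_mono (y : I) {b b' : Fin N → ℝ} (hbb' : b ≤ b') :
    instrumentUtility y₀ i mi y b ≤ instrumentUtility y₀ i mi y b' := by
  unfold instrumentUtility
  split_ifs with h h' <;> first | exact absurd (h.imp_right (·.trans (hbb' i))) h' | norm_num

end instrument

section screening

variable {I : Type}

/-- The menu `(sup X, y₁, 1)`, `(sup X, y₀, 2)`, `(inf X, y₀, 0)`, each type picking its best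
option. -/
def screeningAlloc (X : Set ℝ) (ψ : ℝ → ℝ) (i : Fin N) (mi : ℝ) (θ : ℝ × (Fin N → ℝ)) : ℝ :=
  if mi ≤ θ.2 i ∨ 2 ≤ ψ θ.1 then sSup X else sInf X

def screeningInstrument (y₀ y₁ : I) (i : Fin N) (mi : ℝ) (θ : ℝ × (Fin N → ℝ)) : I :=
  if mi ≤ θ.2 i then y₁ else y₀

def screeningTransfer (ψ : ℝ → ℝ) (i : Fin N) (mi : ℝ) (θ : ℝ × (Fin N → ℝ)) : ℝ :=
  if mi ≤ θ.2 i then 1 else if 2 ≤ ψ θ.1 then 2 else 0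

variable {X : Set ℝ} {ψ : ℝ → ℝ} {y₀ y₁ : I} {i : Fin N} {mi : ℝ}

lemma screening_utility_le (h : sInf X < sSup X) (hψ : ∀ a, 1 ≤ ψ a) (hy₁ : y₁ ≠ y₀)
    (θ θ' : ℝ × (Fin N → ℝ)) :
    productiveUtility X ψ (screeningAlloc X ψ i mi θ') θ.1 +
        instrumentUtility y₀ i mi (screeningInstrument y₀ y₁ i mi θ') θ.2 -
        screeningTransfer ψ i mi θ' ≤
      productiveUtility X ψ (screeningAlloc X ψ i mi θ) θ.1 +
        instrumentUtility y₀ i mi (screeningInstrument y₀ y₁ i mi θ) θ.2 -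
        screeningTransfer ψ i mi θ := by
  have := hψ θ.1
  by_cases h₁ : mi ≤ θ'.2 i <;> by_cases h₂ : 2 ≤ ψ θ'.1 <;> by_cases h₃ : mi ≤ θ.2 i <;>
    by_cases h₄ : 2 ≤ ψ θ.1 <;>
    simp [productiveUtility, screeningAlloc, screeningInstrument, screeningTransfer,
      instrumentUtility, h₁, h₂, h₃, h₄, hy₁, qualityIndex_sInf, qualityIndex_sSup h] <;>
    linarith

lemma screening_utility_nonneg (h : sInf X < sSup X) (hψ : ∀ a, 1 ≤ ψ a) (hy₁ : y₁ ≠ y₀)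
    (θ : ℝ × (Fin N → ℝ)) :
    0 ≤ productiveUtility X ψ (screeningAlloc X ψ i mi θ) θ.1 +
        instrumentUtility y₀ i mi (screeningInstrument y₀ y₁ i mi θ) θ.2 -
        screeningTransfer ψ i mi θ := by
  have := hψ θ.1
  by_cases h₁ : mi ≤ θ.2 i <;> by_cases h₂ : 2 ≤ ψ θ.1 <;>
    simp [productiveUtility, screeningAlloc, screeningInstrument, screeningTransfer,
      instrumentUtility, h₁, h₂, hy₁, qualityIndex_sInf, qualityIndex_sSup h] <;>
    linarith

lemma exists_screeningInstrument_ne {ΘA : Set ℝ} {ΘB : Set (Fin N → ℝ)}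
    {γ : Measure (ℝ × (Fin N → ℝ))} (hγ : γ (ΘA ×ˢ ΘB)ᶜ = 0) (hpos : γ {θ | mi ≤ θ.2 i} ≠ 0)
    (hy₁ : y₁ ≠ y₀) :
    ∃ θ ∈ ΘA ×ˢ ΘB, screeningInstrument y₀ y₁ i mi θ ≠ y₀ := by
  obtain ⟨θ, hθ, hθΩ⟩ := nonempty_of_measure_ne_zero ((measure_inter_conull hγ).trans_ne hpos)
  exact ⟨θ, hθΩ, by rwa [screeningInstrument, if_pos (show mi ≤ θ.2 i from hθ)]⟩

lemma payoff_screening {γ : Measure (ℝ × (Fin N → ℝ))} [IsFiniteMeasure γ] (hψ : Measurable ψ)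
    (hy₁ : y₁ ≠ y₀) (ε : ℝ) :
    Payoff (fun _ _ => 0) (instrumentValue y₀ ε) γ (screeningAlloc X ψ i mi)
        (screeningInstrument y₀ y₁ i mi) (screeningTransfer ψ i mi) =
      (1 - ε) * γ.real {θ | mi ≤ θ.2 i} + 2 * γ.real {θ | ¬ mi ≤ θ.2 i ∧ 2 ≤ ψ θ.1} := by
  have hS₁ : MeasurableSet {θ : ℝ × (Fin N → ℝ) | mi ≤ θ.2 i} :=
    measurableSet_le measurable_const ((measurable_pi_apply i).comp measurable_snd)
  have hS₂ : MeasurableSet {θ : ℝ × (Fin N → ℝ) | ¬ mi ≤ θ.2 i ∧ 2 ≤ ψ θ.1} :=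
    hS₁.compl.inter (measurableSet_le measurable_const (hψ.comp measurable_fst))
  have hpay : (fun θ => 0 + instrumentValue y₀ ε (screeningInstrument y₀ y₁ i mi θ) θ.2 +
      screeningTransfer ψ i mi θ) = fun θ => {θ | mi ≤ θ.2 i}.indicator (fun _ => 1 - ε) θ +
        {θ | ¬ mi ≤ θ.2 i ∧ 2 ≤ ψ θ.1}.indicator (fun _ => 2) θ := by
    ext θ
    by_cases h₁ : mi ≤ θ.2 i <;> by_cases h₂ : 2 ≤ ψ θ.1 <;>
      simp [screeningInstrument, screeningTransfer, instrumentValue, indicator_apply, h₁, h₂,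
        hy₁] <;>
      ring
  rw [Payoff, hpay, integral_add ((integrable_const _).indicator hS₁)
    ((integrable_const _).indicator hS₂), integral_indicator_const _ hS₁,
    integral_indicator_const _ hS₂, smul_eq_mul, smul_eq_mul, mul_comm, mul_comm (γ.real _)]

end screening

lemma mechanism_screening {ΘA : Set ℝ} {ΘB : Set (Fin N → ℝ)} {X : Set ℝ}
    {γ : Measure (ℝ × (Fin N → ℝ))} [IsFiniteMeasure γ] {ψ : ℝ → ℝ} {y₀ y₁ : Y} {i : Fin N}
    {mi : ℝ} (hX : IsCompact X) (hXnt : X.Nontrivial)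
    (hψ : Measurable ψ) (hψ1 : ∀ a, 1 ≤ ψ a) (hy₁ : y₁ ≠ y₀) :
    Mechanism ΘA ΘB X (productiveUtility X ψ) (instrumentUtility y₀ i mi) γ
      (screeningAlloc X ψ i mi) (screeningInstrument y₀ y₁ i mi) (screeningTransfer ψ i mi) := by
  have hX' := hX.sInf_lt_sSup hXnt
  have hS₁ : MeasurableSet {θ : ℝ × (Fin N → ℝ) | mi ≤ θ.2 i} :=
    measurableSet_le measurable_const ((measurable_pi_apply i).comp measurable_snd)
  have hS₂ : MeasurableSet {θ : ℝ × (Fin N → ℝ) | 2 ≤ ψ θ.1} :=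
    measurableSet_le measurable_const (hψ.comp measurable_fst)
  have ht : Measurable (screeningTransfer ψ i mi) :=
    Measurable.ite hS₁ measurable_const (Measurable.ite hS₂ measurable_const measurable_const)
  refine ⟨Measurable.ite (hS₁.union hS₂) measurable_const measurable_const,
    Measurable.ite hS₁ measurable_const measurable_const, ht,
    Integrable.of_bound ht.aestronglyMeasurable 2 (ae_of_all _ fun θ => ?_), fun θ _ => ?_,
    fun θ _ θ' _ => screening_utility_le hX' hψ1 hy₁ θ θ',
    fun θ _ => screening_utility_nonneg hX' hψ1 hy₁ θ⟩
  · unfold screeningTransfer; split_ifs <;> norm_num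
  · unfold screeningAlloc
    split_ifs
    exacts [hX.sSup_mem hXnt.nonempty, hX.sInf_mem hXnt.nonempty]

lemma mul_measureReal_le_sub_setIntegral {α : Type*} [MeasurableSpace α] {μ : Measure α}
    [IsFiniteMeasure μ] {t : α → ℝ} {L : Set α} (ht : IntegrableOn t L μ) {s c : ℝ}
    (h : ∀ᵐ θ ∂μ.restrict L, s + t θ ≤ c) :
    s * μ.real L ≤ c * μ.real L - ∫ θ in L, t θ ∂μ := by
  have : ∫ θ in L, (s + t θ) ∂μ ≤ ∫ _ in L, c ∂μ :=
    integral_mono_ae ((integrable_const s).add ht) (integrable_const c) h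
  rw [integral_add (integrable_const s) ht, integral_const, integral_const, smul_eq_mul,
    smul_eq_mul, measureReal_restrict_apply_univ] at this
  linarith

lemma integral_le_setIntegral_add_of_le_indicator {α : Type*} [MeasurableSpace α]
    {μ : Measure α} [IsFiniteMeasure μ] {t : α → ℝ} (ht : Integrable t μ) {L M F : Set α}
    (hL : MeasurableSet L) (hM : MeasurableSet M) (hF : MeasurableSet F) {c K : ℝ}
    (h : ∀ᵐ θ ∂μ,
      t θ ≤ L.indicator t θ + M.indicator (fun _ => c) θ + F.indicator (fun _ => K) θ) :
    ∫ θ, t θ ∂μ ≤ ∫ θ in L, t θ ∂μ + c * μ.real M + K * μ.real F := by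
  have htL := ht.indicator hL
  have hcM := (integrable_const (μ := μ) c).indicator hM
  have hKF := (integrable_const (μ := μ) K).indicator hF
  calc ∫ θ, t θ ∂μ
      ≤ ∫ θ, (L.indicator t θ + M.indicator (fun _ => c) θ + F.indicator (fun _ => K) θ) ∂μ :=
        integral_mono_ae ht ((htL.add hcM).add hKF) h
    _ = ∫ θ in L, t θ ∂μ + c * μ.real M + K * μ.real F := by
        rw [integral_add (f := fun θ => L.indicator t θ + M.indicator (fun _ => c) θ)
          (htL.add hcM) hKF, integral_add htL hcM, integral_indicator hL,
          integral_indicator_const _ hM, integral_indicator_const _ hF, smul_eq_mul, smul_eq_mul,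
          mul_comm (μ.real M), mul_comm (μ.real F)]

lemma add_le_of_incentiveCompatible {qH qL ψH ψL tH tL η : ℝ} (hqH : qH ≤ 1)
    (hqL : qL ∈ Icc 0 1) (hη : 0 ≤ η) (hψH : 2 ≤ ψH) (hψH' : ψH ≤ 2 + η) (hψL : ψL ≤ 1 + η)
    (hIR : tL ≤ qL * ψL) (hIC : tH ≤ tL + (qH - qL) * ψH) : tH + tL ≤ 2 + 3 * η := by
  have := mul_le_mul_of_nonneg_left hψL hqL.1
  have := mul_le_mul_of_nonneg_left hψH hqL.1
  have := mul_le_of_le_one_left (zero_le_two.trans hψH) hqH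
  have := mul_le_of_le_one_right hη hqL.2
  nlinarith

/-- Pairing each type above `m + δ` with each type below `m` through IC and IR shows that
their transfers add up to at most `2 + 3η`. -/
theorem integral_le_of_incentiveCompatible {α : Type*} [MeasurableSpace α] {μ : Measure α}
    [IsProbabilityMeasure μ] {a q t : α → ℝ} {ψ : ℝ → ℝ} {Ω : Set α} {m δ η : ℝ}
    (ha : Measurable a) (ht : Integrable t μ) (hΩ : μ Ωᶜ = 0) (hδ : 0 < δ) (hη : 0 ≤ η)
    (hη1 : η ≤ 1) (hψ0 : ∀ a, 0 ≤ ψ a) (hψ : ∀ a, ψ a ≤ 2 + η) (hψL : ∀ a ≤ m, ψ a ≤ 1 + η)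
    (hψH : ∀ a, m + δ ≤ a → 2 ≤ ψ a)
    (hL : μ.real {θ | a θ ≤ m} = 1 / 2) (hR : μ.real {θ | m < a θ} = 1 / 2)
    (hq : ∀ θ ∈ Ω, q θ ∈ Icc 0 1) (hIR : ∀ θ ∈ Ω, t θ ≤ q θ * ψ (a θ))
    (hIC : ∀ θ ∈ Ω, ∀ θ' ∈ Ω, t θ ≤ t θ' + (q θ - q θ') * ψ (a θ)) :
    ∫ θ, t θ ∂μ ≤ 1 + 3 / 2 * η + 3 * μ.real {θ | m < a θ ∧ a θ < m + δ} := by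
  set L := {θ | a θ ≤ m}
  set H := {θ | m + δ ≤ a θ}
  have hLm : MeasurableSet L := measurableSet_le ha measurable_const
  have hΩae : ∀ᵐ θ ∂μ, θ ∈ Ω := measure_eq_zero_iff_ae_notMem.1 hΩ |>.mono fun _ => not_not.1
  have hbound : ∀ θ ∈ Ω, t θ ≤ ψ (a θ) := fun θ hθ =>
    (hIR θ hθ).trans (mul_le_of_le_one_left (hψ0 _) (hq θ hθ).2)
  set TL := ∫ θ in L, t θ ∂μ
  have hTL : TL ≤ (1 + η) / 2 := by
    have : TL ≤ ∫ _ in L, (1 + η) ∂μ := integral_mono_ae ht.integrableOn (integrable_const _) <| by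
      filter_upwards [ae_restrict_mem hLm, ae_restrict_of_ae hΩae] with θ hθL hθ
      exact (hbound θ hθ).trans (hψL _ hθL)
    rwa [setIntegral_const, smul_eq_mul, hL, one_div_mul_eq_div] at this
  set K := 2 + 3 * η - 2 * TL with hKdef
  have hK : ∀ᵐ θ ∂μ, θ ∈ H → t θ ≤ K := by
    filter_upwards [hΩae] with θ hθ hθH
    have := mul_measureReal_le_sub_setIntegral ht.integrableOn (s := t θ) (c := 2 + 3 * η) <| by
      filter_upwards [ae_restrict_mem hLm, ae_restrict_of_ae hΩae] with θ' hθ'L hθ'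
      exact add_le_of_incentiveCompatible (hq θ hθ).2 (hq θ' hθ') hη (hψH _ hθH) (hψ _)
        (hψL _ hθ'L) (hIR θ' hθ') (hIC θ hθ θ' hθ')
    rw [hL] at this
    linarith
  have hpoint : ∀ᵐ θ ∂μ, t θ ≤ L.indicator t θ +
      {θ | m < a θ ∧ a θ < m + δ}.indicator (fun _ => 3) θ + H.indicator (fun _ => K) θ := by
    filter_upwards [hΩae, hK] with θ hθ hθK
    have := hbound θ hθ
    have := hψ (a θ)
    simp only [indicator_apply, L, H, mem_ofPred_eq]
    split_ifs <;>
      first | linarith | linarith [hθK ‹_›] | exact absurd ⟨by linarith, by linarith⟩ ‹¬(_ ∧ _)›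
  have hH : μ.real H ≤ 1 / 2 :=
    hR ▸ measureReal_mono fun θ (hθ : m + δ ≤ a θ) => show m < a θ by linarith
  have := integral_le_setIntegral_add_of_le_indicator ht hLm
    (M := {θ | m < a θ ∧ a θ < m + δ})
    ((measurableSet_lt measurable_const ha).inter (measurableSet_lt ha measurable_const))
    (measurableSet_le measurable_const ha) hpoint
  have := mul_le_mul_of_nonneg_left hH (by linarith : 0 ≤ K)
  linarith

lemma payoff_le_of_noCostlyScreening {ΘA : Set ℝ} {ΘB : Set (Fin N → ℝ)} {X : Set ℝ}
    {γ : Measure (ℝ × (Fin N → ℝ))} [IsProbabilityMeasure γ] {y₀ : Y} {i : Fin N}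
    {ψ : ℝ → ℝ} {mi ε m δ η : ℝ} {x : ℝ × (Fin N → ℝ) → ℝ} {y : ℝ × (Fin N → ℝ) → Y}
    {t : ℝ × (Fin N → ℝ) → ℝ} (hX : IsCompact X) (hγ : γ (ΘA ×ˢ ΘB)ᶜ = 0) (hδ : 0 < δ)
    (hη : 0 ≤ η) (hη1 : η ≤ 1) (hψ0 : ∀ a, 0 ≤ ψ a) (hψ : ∀ a, ψ a ≤ 2 + η)
    (hψL : ∀ a ≤ m, ψ a ≤ 1 + η) (hψF : ∀ a, m + δ ≤ a → 2 ≤ ψ a)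
    (hL : γ.real {θ | θ.1 ≤ m} = 1 / 2) (hR : γ.real {θ | m < θ.1} = 1 / 2)
    (hM : Mechanism ΘA ΘB X (productiveUtility X ψ) (instrumentUtility y₀ i mi) γ x y t)
    (hN : NoCostlyScreening y₀ x y t) :
    Payoff (fun _ _ => 0) (instrumentValue y₀ ε) γ x y t ≤
      1 + 3 / 2 * η + 3 * γ.real {θ | m < θ.1 ∧ θ.1 < m + δ} := by
  obtain ⟨-, -, -, ht, hxX, hIC, hIR⟩ := hM
  simp only [Payoff, hN.1, instrumentValue_self, zero_add]
  refine integral_le_of_incentiveCompatible measurable_fst ht hγ hδ hη hη1 hψ0 hψ hψL hψF hL hR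
    (q := fun θ => qualityIndex X (x θ)) (fun θ hθ => qualityIndex_mem_Icc hX (hxX θ hθ))
    (fun θ hθ => ?_) (fun θ hθ θ' hθ' => ?_)
  · have := hIR θ hθ
    simp only [hN.1, instrumentUtility_self, productiveUtility] at this
    linarith
  · have := hIC θ hθ θ' hθ'
    simp only [hN.1, instrumentUtility_self, productiveUtility] at this
    linarith

lemma measureReal_setOf_lt_le_add {α : Type*} [MeasurableSpace α] {μ : Measure α}
    [IsFiniteMeasure μ] {a b : α → ℝ} {ψ : ℝ → ℝ} {m δ c : ℝ}
    (hψ : ∀ a, m + δ ≤ a → 2 ≤ ψ a) :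
    μ.real {θ | m < a θ} ≤ μ.real {θ | ¬ c ≤ b θ ∧ 2 ≤ ψ (a θ)} +
      μ.real {θ | m < a θ ∧ c ≤ b θ} + μ.real {θ | m < a θ ∧ a θ < m + δ} := by
  have hsub : {θ | m < a θ} ⊆ ({θ | ¬ c ≤ b θ ∧ 2 ≤ ψ (a θ)} ∪ {θ | m < a θ ∧ c ≤ b θ}) ∪
      {θ | m < a θ ∧ a θ < m + δ} := by
    intro θ (hθ : m < a θ)
    by_cases hb : c ≤ b θ
    · exact .inl (.inr ⟨hθ, hb⟩)
    by_cases ha : a θ < m + δ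
    · exact .inr ⟨hθ, ha⟩
    · exact .inl (.inl ⟨hb, hψ _ (not_lt.1 ha)⟩)
  calc μ.real {θ | m < a θ} ≤ _ := measureReal_mono hsub
    _ ≤ _ := measureReal_union_le _ _
    _ ≤ _ := by gcongr; exact measureReal_union_le _ _

lemma payoff_lt_payoff_screening {ΘA : Set ℝ} {ΘB : Set (Fin N → ℝ)} {X : Set ℝ}
    {γ : Measure (ℝ × (Fin N → ℝ))} [IsProbabilityMeasure γ] {y₀ y₁ : Y} {i : Fin N}
    {m mi δ Δ : ℝ} {x : ℝ × (Fin N → ℝ) → ℝ} {y : ℝ × (Fin N → ℝ) → Y}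
    {t : ℝ × (Fin N → ℝ) → ℝ} (hX : IsCompact X) (hγ : γ (ΘA ×ˢ ΘB)ᶜ = 0) (hy₁ : y₁ ≠ y₀)
    (hδ : 0 < δ) (hΔ : 0 < Δ) (hm : γ {θ | m < θ.1} = 1 / 2 ∧ γ {θ | θ.1 ≤ m} = 1 / 2)
    (hmi : γ {θ | mi ≤ θ.2 i} = 1 / 2)
    (hquadrant : γ.real {θ | m < θ.1 ∧ mi ≤ θ.2 i} = 1 / 4 - Δ)
    (hband : γ.real {θ | m < θ.1 ∧ θ.1 < m + δ} ≤ Δ / 10)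
    (hM : Mechanism ΘA ΘB X (productiveUtility X (typeValue m δ (Δ / 10)))
      (instrumentUtility y₀ i mi) γ x y t)
    (hN : NoCostlyScreening y₀ x y t) :
    Payoff (fun _ _ => 0) (instrumentValue y₀ Δ) γ x y t <
      Payoff (fun _ _ => 0) (instrumentValue y₀ Δ) γ
        (screeningAlloc X (typeValue m δ (Δ / 10)) i mi) (screeningInstrument y₀ y₁ i mi)
        (screeningTransfer (typeValue m δ (Δ / 10)) i mi) := by
  have hη : 0 ≤ Δ / 10 := by positivity
  have hΔ1 : Δ ≤ 1 / 4 := by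
    linarith [hquadrant ▸ measureReal_nonneg (μ := γ) (s := {θ | m < θ.1 ∧ mi ≤ θ.2 i})]
  have hR : γ.real {θ | m < θ.1} = 1 / 2 := by simp [measureReal_def, hm.1]
  have hψF : ∀ a, m + δ ≤ a → 2 ≤ typeValue m δ (Δ / 10) a := fun _ => two_le_typeValue hδ hη
  have htheirs := payoff_le_of_noCostlyScreening hX hγ hδ hη (by linarith)
    (fun a => zero_le_one.trans (one_le_typeValue hη a)) (typeValue_le hη)
    (fun _ => typeValue_le_of_le hδ hη) hψF (by simp [measureReal_def, hm.2]) hR hM hN (ε := Δ)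
  have hsplit := measureReal_setOf_lt_le_add (μ := γ) (a := Prod.fst) (b := fun θ => θ.2 i)
    (c := mi) hψF
  rw [payoff_screening continuous_typeValue.measurable hy₁ Δ,
    show γ.real {θ | mi ≤ θ.2 i} = 1 / 2 by simp [measureReal_def, hmi]]
  rw [hR] at hsplit
  linarith

theorem stmt2
    (y₀ : Y) (hy₀ : MeasurableSet ({y₀} : Set Y))
    (ΘA : Set ℝ) (ΘB : Set (Fin N → ℝ)) (X : Set ℝ)
    (hX : IsCompact X)
    (γ : Measure (ℝ × (Fin N → ℝ))) (hγp : IsProbabilityMeasure γ)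
    (hγsupp : γ ((ΘA ×ˢ ΘB)ᶜ) = 0)
    -- θ is absolutely continuous
    (hac : γ ≪ (volume : Measure (ℝ × (Fin N → ℝ))))
    -- |X| > 1 and |Y| > 1
    (hXnt : Set.Nontrivial X) (hYnt : ∃ y₁ : Y, y₁ ≠ y₀)
    -- the distinguished costly coordinate
    (i : Fin N)
    -- θ^i is stochastically nonincreasing in θ^0
    (hmono : ∃ κ : Kernel ℝ ℝ,
      IsRCD (Measure.map (fun θ : ℝ × (Fin N → ℝ) => (θ.1, θ.2 i)) γ) κ ∧
      ∀ a ∈ MSupport γ.fst, ∀ a' ∈ MSupport γ.fst, a < a' →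
        ∀ f : ℝ → ℝ, Measurable f → Monotone f → (∃ M, ∀ b, |f b| ≤ M) →
          ∫ b, f b ∂(κ a') ≤ ∫ b, f b ∂(κ a))
    -- medians of θ^0 and θ^i
    (m0 mi : ℝ)
    (hm0 : γ {θ : ℝ × (Fin N → ℝ) | m0 < θ.1} = 1 / 2 ∧
           γ {θ : ℝ × (Fin N → ℝ) | θ.1 ≤ m0} = 1 / 2)
    (hmi : γ {θ : ℝ × (Fin N → ℝ) | mi < θ.2 i} = 1 / 2 ∧
           γ {θ : ℝ × (Fin N → ℝ) | θ.2 i ≤ mi} = 1 / 2)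
    -- the binarizations β(θ^i), β(θ^0) are not independent
    (hdep : γ {θ : ℝ × (Fin N → ℝ) | m0 ≤ θ.1 ∧ mi ≤ θ.2 i} ≠
      γ {θ : ℝ × (Fin N → ℝ) | m0 ≤ θ.1} * γ {θ : ℝ × (Fin N → ℝ) | mi ≤ θ.2 i}) :
    ∃ (uA vA : ℝ → ℝ → ℝ) (uB vB : Y → (Fin N → ℝ) → ℝ),
      -- admissibility of the utility functions
      ContinuousOn (fun p : ℝ × ℝ => uA p.1 p.2) (X ×ˢ ΘA) ∧
      ContinuousOn (fun p : ℝ × ℝ => vA p.1 p.2) (X ×ˢ ΘA) ∧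
      Measurable (fun p : Y × (Fin N → ℝ) => uB p.1 p.2) ∧
      Measurable (fun p : Y × (Fin N → ℝ) => vB p.1 p.2) ∧
      (∃ M, ∀ y, ∀ b ∈ ΘB, |uB y b| ≤ M) ∧
      (∃ M, ∀ y, ∀ b ∈ ΘB, |vB y b| ≤ M) ∧
      (∀ b, uB y₀ b = 0) ∧ (∀ b, vB y₀ b = 0) ∧
      (∀ y : Y, y ≠ y₀ → ∀ b ∈ ΘB, uB y b + vB y b < 0) ∧
      (∀ x ∈ X, ∀ a ∈ ΘA, ∀ a' ∈ ΘA, a ≤ a' → uA x a ≤ uA x a') ∧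
      (∀ x ∈ X, ∀ x' ∈ X, x < x' → ∀ a ∈ ΘA, ∀ a' ∈ ΘA, a < a' →
        uA x' a - uA x a < uA x' a' - uA x a') ∧
      (∀ x ∈ X, ∀ x' ∈ X, x < x' → ∀ a ∈ ΘA, ∀ a' ∈ ΘA, a < a' →
        0 < (uA x' a + vA x' a) - (uA x a + vA x a) →
        0 < (uA x' a' + vA x' a') - (uA x a' + vA x a')) ∧
      (∀ y : Y, ∀ b ∈ ΘB, ∀ b' ∈ ΘB, b ≤ b' → uB y b ≤ uB y b') ∧
      -- a mechanism involving costly screening …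
      ∃ x y t, Mechanism ΘA ΘB X uA uB γ x y t ∧
        (∃ θ ∈ ΘA ×ˢ ΘB, y θ ≠ y₀) ∧
        -- … strictly dominates every mechanism screening only the productive
        -- component
        ∀ x' y' t', Mechanism ΘA ΘB X uA uB γ x' y' t' →
          NoCostlyScreening y₀ x' y' t' →
          Payoff vA vB γ x' y' t' < Payoff vA vB γ x y t := by
  obtain ⟨y₁, hy₁⟩ := hYnt
  obtain ⟨κ, hκ, hκmono⟩ := hmono
  have hmi' : γ {θ | mi ≤ θ.2 i} = 1 / 2 :=
    (measure_setOf_le_eq_lt (hac (volume_setOf_snd_apply_eq i mi))).trans hmi.1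
  set Δ := 1 / 4 - γ.real {θ | m0 < θ.1 ∧ mi ≤ θ.2 i}
  have hΔpos : 0 < Δ :=
    sub_pos.2 (measureReal_upper_quadrant_lt_quarter hac i hκ hκmono hm0 hmi' hdep)
  obtain ⟨δ, hδ, hband⟩ :=
    exists_measureReal_Ioo_le γ measurable_fst m0 (by positivity : 0 < Δ / 10)
  have hXlt := hX.sInf_lt_sSup hXnt
  have hψ := strictMono_typeValue (m := m0) hδ (by positivity : 0 < Δ / 10)
  have hψ1 := one_le_typeValue (m := m0) (δ := δ) (by positivity : 0 ≤ Δ / 10)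
  refine ⟨productiveUtility X (typeValue m0 δ (Δ / 10)), fun _ _ => 0, instrumentUtility y₀ i mi,
    instrumentValue y₀ Δ, (continuous_productiveUtility continuous_typeValue).continuousOn,
    continuousOn_const, measurable_instrumentUtility hy₀ i mi, measurable_instrumentValue hy₀ Δ,
    ⟨1, fun y b _ => abs_instrumentUtility_le y b⟩,
    ⟨Δ, fun y b _ => abs_instrumentValue_le hΔpos.le y b⟩,
    instrumentUtility_self y₀ i mi, instrumentValue_self y₀ Δ,
    fun y hy b _ => instrumentUtility_add_instrumentValue_neg hΔpos hy b,
    fun x hx a _ a' _ => productiveUtility_le_productiveUtility hX hψ.monotone hx,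
    fun x _ x' _ hxx' a _ a' _ => productiveUtility_sub_lt_sub hXlt hψ hxx',
    fun x _ x' _ hxx' _ _ a' _ _ _ => by
      simpa using productiveUtility_lt_productiveUtility hXlt hxx' (one_pos.trans_le (hψ1 a')),
    fun y b _ b' _ => instrumentUtility_mono y,
    _, _, _, mechanism_screening hX hXnt continuous_typeValue.measurable hψ1 hy₁,
    exists_screeningInstrument_ne hγsupp (by simp [hmi']) hy₁,
    fun x' y' t' hM hN =>
      payoff_lt_payoff_screening hX hγsupp hy₁ hδ hΔpos hm0 hmi' (by ring) hband hM hN⟩
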